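/- Let X be a nonempty compact metric space, Y a Hausdorff topological space, and Γ : X × [0,1] → Y a continuous map such that the map x ↦ Γ(x,0) is injective. Suppose there is a sequence (tₙ) of reals with 0 < tₙ ≤ 1 and tₙ → 0, and for each n there are points aₙ ≠ bₙ in X with Γ(aₙ,tₙ) = Γ(bₙ,tₙ). Then there exists a point a ∈ X such that Γ is not injective on any neighborhood of (a,0) in X × [0,1]; in particular, Γ is not locally injective. -/
import Mathlib


/-- Let `X` be a nonempty compact metric space, `Y` a Hausdorff space, and
`Γ : X × [0,1] → Y` continuous with `x ↦ Γ(x,0)` injective. If there is a sequence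
`tₙ ∈ (0,1]` with `tₙ → 0` and points `aₙ ≠ bₙ` in `X` with `Γ(aₙ,tₙ) = Γ(bₙ,tₙ)`,
then some point `(a,0)` has no neighborhood on which `Γ` is injective. -/
theorem stmt0 {X Y : Type*} [MetricSpace X] [CompactSpace X] [Nonempty X]
    [TopologicalSpace Y] [T2Space Y]
    (Γ : X × unitInterval → Y) (hΓ : Continuous Γ)
    (hinj : Function.Injective fun x : X => Γ (x, 0))
    (t : ℕ → unitInterval) (ht0 : ∀ n, 0 < t n)
    (htlim : Filter.Tendsto t Filter.atTop (nhds 0))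
    (a b : ℕ → X) (hab : ∀ n, a n ≠ b n)
    (heq : ∀ n, Γ (a n, t n) = Γ (b n, t n)) :
    ∃ x : X, ∀ U ∈ nhds ((x, 0) : X × unitInterval), ¬ Set.InjOn Γ U := by
  obtain ⟨A, φ, hφ, hA⟩ := CompactSpace.tendsto_subseq a
  obtain ⟨B, ψ, hψ, hB⟩ := CompactSpace.tendsto_subseq (b ∘ φ)
  have hA' : Filter.Tendsto (a ∘ φ ∘ ψ) Filter.atTop (nhds A) :=
    hA.comp hψ.tendsto_atTop
  have htlim' : Filter.Tendsto (t ∘ φ ∘ ψ) Filter.atTop (nhds 0) :=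
    htlim.comp ((hφ.comp hψ).tendsto_atTop)
  have hPA : Filter.Tendsto (fun n => ((a ∘ φ ∘ ψ) n, (t ∘ φ ∘ ψ) n))
      Filter.atTop (nhds (A, 0)) := hA'.prodMk_nhds htlim'
  have hPB : Filter.Tendsto (fun n => ((b ∘ φ ∘ ψ) n, (t ∘ φ ∘ ψ) n))
      Filter.atTop (nhds (B, 0)) := hB.prodMk_nhds htlim'
  have hAB : A = B := by
    apply hinj
    have h1 : Filter.Tendsto (fun n => Γ ((a ∘ φ ∘ ψ) n, (t ∘ φ ∘ ψ) n))
        Filter.atTop (nhds (Γ (A, 0))) := (hΓ.continuousAt.tendsto).comp hPA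
    have h2 : Filter.Tendsto (fun n => Γ ((b ∘ φ ∘ ψ) n, (t ∘ φ ∘ ψ) n))
        Filter.atTop (nhds (Γ (B, 0))) := (hΓ.continuousAt.tendsto).comp hPB
    have : (fun n => Γ ((a ∘ φ ∘ ψ) n, (t ∘ φ ∘ ψ) n)) =
        fun n => Γ ((b ∘ φ ∘ ψ) n, (t ∘ φ ∘ ψ) n) := by
      funext n; exact heq _
    rw [this] at h1
    exact tendsto_nhds_unique h1 h2
  subst hAB
  refine ⟨A, fun U hU hInj => ?_⟩
  have h1 := hPA.eventually_mem hU
  have h2 := hPB.eventually_mem hU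
  obtain ⟨n, hn1, hn2⟩ := (h1.and h2).exists
  have := hInj hn1 hn2 (heq _)
  exact hab (φ (ψ n)) (congrArg Prod.fst this)
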